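/- arXiv:2004.13417 — 2 statements merged into one kernel-verified Lean document; each statement's English description precedes it below -/
import Mathlib

section
/- Let f : ℝ^n → ℝ be differentiable and μ-strongly convex with μ > 0, let a_1,…,a_m ∈ ℝ^n be nonzero and b_1,…,b_m ∈ ℝ. Let 0 < γ ≤ γ' and δ ≥ δ' > 0, and let x* be the (unique) minimizer of F_{γδ} over ℝ^n and y* the (unique) minimizer of F_{γ'δ'} over ℝ^n. Then μ ‖x* − y*‖ ≤ (γ' − γ) + γ (δ − δ')/(2δ). -/
open scoped RealInnerProductSpace

/-- The one-sided Huber penalty `h_δ(x; a, b)`. -/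
noncomputable def huber {n : ℕ} (δ : ℝ) (a : EuclideanSpace ℝ (Fin n)) (b : ℝ)
    (x : EuclideanSpace ℝ (Fin n)) : ℝ :=
  if δ < ⟪a, x⟫ - b then (⟪a, x⟫ - b) / ‖a‖
  else if -δ ≤ ⟪a, x⟫ - b then (⟪a, x⟫ - b + δ) ^ 2 / (4 * δ * ‖a‖)
  else 0

/-!
Both penalized objectives are `μ`-strongly convex, so each grows at least like
`μ/2 ‖· - minimizer‖²` away from its minimizer. Adding the two growth inequalities gives
`μ ‖x* - y*‖² ≤ D x* - D y*`, where `D` is the difference of the two objectives; `f` cancels in `D`.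
Writing `h_δ(x; a, b) = H_δ(⟪a, x⟫ - b) / ‖a‖` with a scalar profile `H_δ`, the derivative of
`γ' H_δ' - γ H_δ` is bounded by `(γ' - γ) + γ (δ - δ') / (2δ)`, because `H_δ'` takes values in
`[0, 1]` and moves by at most `(δ - δ') / (2δ)` when `δ` shrinks to `δ'`. Hence `D` is Lipschitz
with that constant, which therefore bounds `μ ‖x* - y*‖`.
-/

open Filter Topology Asymptotics Set
open scoped NNReal

lemma hasDerivAt_max_zero_sq (x : ℝ) : HasDerivAt (fun y : ℝ => max 0 y ^ 2) (2 * max 0 x) x := by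
  rcases lt_trichotomy x 0 with hx | rfl | hx
  · rw [max_eq_left hx.le, mul_zero]
    refine (hasDerivAt_const x (0 : ℝ)).congr_of_eventuallyEq ?_
    filter_upwards [Iic_mem_nhds hx] with y (hy : y ≤ 0)
    simp [max_eq_left hy]
  · have hsq : (fun h : ℝ => max 0 h ^ 2) =O[𝓝 0] fun h => h ^ 2 :=
      IsBigO.of_bound 1 (Eventually.of_forall fun h => by
        rcases le_total h 0 with h0 | h0 <;> simp [h0, sq_nonneg])
    rw [hasDerivAt_iff_isLittleO_nhds_zero]
    simpa using hsq.trans_isLittleO (isLittleO_pow_id one_lt_two)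
  · rw [max_eq_right hx.le]
    refine ((hasDerivAt_pow 2 x).congr_of_eventuallyEq ?_).congr_deriv (by ring)
    filter_upwards [Ici_mem_nhds hx] with y (hy : 0 ≤ y)
    simp [max_eq_right hy]

section ScalarHuber

/-- The profile `H_δ` of the penalty: it equals `0`, `(t + δ)² / (4δ)` and `t` on the three pieces
of the definition of `huber`, and this form makes its differentiability evident. -/
noncomputable def scalarHuber (δ t : ℝ) : ℝ := (max 0 (t + δ) ^ 2 - max 0 (t - δ) ^ 2) / (4 * δ)

noncomputable def scalarHuberSlope (δ t : ℝ) : ℝ := (max 0 (t + δ) - max 0 (t - δ)) / (2 * δ)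

lemma hasDerivAt_scalarHuber (δ t : ℝ) : HasDerivAt (scalarHuber δ) (scalarHuberSlope δ t) t := by
  have hplus := (hasDerivAt_max_zero_sq (t + δ)).comp t ((hasDerivAt_id t).add_const δ)
  have hminus := (hasDerivAt_max_zero_sq (t - δ)).comp t ((hasDerivAt_id t).sub_const δ)
  refine ((hplus.sub hminus).div_const (4 * δ)).congr_deriv ?_
  unfold scalarHuberSlope
  rcases eq_or_ne δ 0 with rfl | hδ
  · simp
  · field_simp; ring

variable {δ δ' : ℝ}

lemma scalarHuberSlope_nonneg (hδ : 0 ≤ δ) (t : ℝ) : 0 ≤ scalarHuberSlope δ t :=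
  div_nonneg (sub_nonneg.2 (max_le_max le_rfl (by linarith))) (by positivity)

lemma scalarHuberSlope_le_one (hδ : 0 ≤ δ) (t : ℝ) : scalarHuberSlope δ t ≤ 1 := by
  refine div_le_one_of_le₀ ?_ (by positivity)
  rcases max_cases 0 (t + δ) with h | h <;> rcases max_cases 0 (t - δ) with h' | h' <;> linarith

lemma monotone_scalarHuberSlope (hδ : 0 ≤ δ) : Monotone (scalarHuberSlope δ) := by
  intro s t hst
  refine div_le_div_of_nonneg_right ?_ (by positivity)
  rcases max_cases 0 (t + δ) with h | h <;> rcases max_cases 0 (t - δ) with h' | h' <;>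
    rcases max_cases 0 (s + δ) with h'' | h'' <;> rcases max_cases 0 (s - δ) with h''' | h''' <;>
    linarith

lemma convexOn_scalarHuber (hδ : 0 ≤ δ) : ConvexOn ℝ Set.univ (scalarHuber δ) := by
  have hderiv : deriv (scalarHuber δ) = scalarHuberSlope δ :=
    funext fun t => (hasDerivAt_scalarHuber δ t).deriv
  exact Monotone.convexOn_univ_of_deriv (fun t => (hasDerivAt_scalarHuber δ t).differentiableAt)
    (hderiv ▸ monotone_scalarHuberSlope hδ)

lemma abs_scalarHuberSlope_sub_le (hδ' : 0 < δ') (hδδ' : δ' ≤ δ) (t : ℝ) :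
    |scalarHuberSlope δ' t - scalarHuberSlope δ t| ≤ (δ - δ') / (2 * δ) := by
  have hδ : 0 < δ := hδ'.trans_le hδδ'
  unfold scalarHuberSlope
  rw [div_sub_div _ _ (by positivity) (by positivity), abs_div,
    abs_of_pos (by positivity : (0 : ℝ) < 2 * δ' * (2 * δ)),
    div_le_div_iff₀ (by positivity) (by positivity),
    show (δ - δ') * (2 * δ' * (2 * δ)) = (δ - δ') * (2 * δ') * (2 * δ) by ring,
    mul_le_mul_iff_left₀ (by positivity), abs_le]
  rcases max_cases 0 (t + δ) with h | h <;> rcases max_cases 0 (t - δ) with h' | h' <;>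
    rcases max_cases 0 (t + δ') with h'' | h'' <;> rcases max_cases 0 (t - δ') with h''' | h''' <;>
    constructor <;> nlinarith [mul_pos hδ hδ']

variable {γ γ' : ℝ}

lemma abs_mul_scalarHuberSlope_sub_le (hγ : 0 ≤ γ) (hγγ' : γ ≤ γ') (hδ' : 0 < δ')
    (hδδ' : δ' ≤ δ) (t : ℝ) :
    |γ' * scalarHuberSlope δ' t - γ * scalarHuberSlope δ t| ≤
      (γ' - γ) + γ * (δ - δ') / (2 * δ) := by
  have hslope := scalarHuberSlope_nonneg hδ'.le t
  calc |γ' * scalarHuberSlope δ' t - γ * scalarHuberSlope δ t|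
      = |(γ' - γ) * scalarHuberSlope δ' t +
          γ * (scalarHuberSlope δ' t - scalarHuberSlope δ t)| := by ring_nf
    _ ≤ |(γ' - γ) * scalarHuberSlope δ' t| +
          |γ * (scalarHuberSlope δ' t - scalarHuberSlope δ t)| := abs_add_le _ _
    _ = (γ' - γ) * scalarHuberSlope δ' t +
          γ * |scalarHuberSlope δ' t - scalarHuberSlope δ t| := by
        rw [abs_mul, abs_mul, abs_of_nonneg (sub_nonneg.2 hγγ'), abs_of_nonneg hslope,
          abs_of_nonneg hγ]
    _ ≤ (γ' - γ) * 1 + γ * ((δ - δ') / (2 * δ)) := by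
        gcongr
        · exact scalarHuberSlope_le_one hδ'.le t
        · exact abs_scalarHuberSlope_sub_le hδ' hδδ' t
    _ = (γ' - γ) + γ * (δ - δ') / (2 * δ) := by ring

lemma lipschitzWith_scalarHuber_sub (hγ : 0 ≤ γ) (hγγ' : γ ≤ γ') (hδ' : 0 < δ')
    (hδδ' : δ' ≤ δ) :
    LipschitzWith (Real.toNNReal ((γ' - γ) + γ * (δ - δ') / (2 * δ)))
      (fun t => γ' * scalarHuber δ' t - γ * scalarHuber δ t) := by
  refine LipschitzWith.of_dist_le' fun s t => ?_
  simp_rw [Real.dist_eq, ← Real.norm_eq_abs]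
  refine convex_univ.norm_image_sub_le_of_norm_hasDerivWithin_le
    (f := fun t => γ' * scalarHuber δ' t - γ * scalarHuber δ t) (fun u _ => ?_)
    (fun u _ => (Real.norm_eq_abs _).trans_le
      (abs_mul_scalarHuberSlope_sub_le hγ hγγ' hδ' hδδ' u)) (mem_univ t) (mem_univ s)
  exact (((hasDerivAt_scalarHuber δ' u).const_mul γ').sub
    ((hasDerivAt_scalarHuber δ u).const_mul γ)).hasDerivWithinAt

lemma scalarHuber_eq_ite (hδ : 0 < δ) (t : ℝ) :
    scalarHuber δ t = if δ < t then t else if -δ ≤ t then (t + δ) ^ 2 / (4 * δ) else 0 := by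
  unfold scalarHuber
  split_ifs with h₁ h₂
  · rw [max_eq_right (by linarith), max_eq_right (by linarith)]; field_simp; ring
  · rw [max_eq_right (by linarith), max_eq_left (by linarith)]; ring
  · rw [max_eq_left (by linarith), max_eq_left (by linarith)]; ring

end ScalarHuber

section InnerProductSpace

variable {E : Type*} [NormedAddCommGroup E] [InnerProductSpace ℝ E]

lemma LipschitzWith.comp_inner_sub_div_norm {ψ : ℝ → ℝ} {K : ℝ≥0} (hψ : LipschitzWith K ψ)
    (a : E) (b : ℝ) : LipschitzWith K fun x => ψ (⟪a, x⟫ - b) / ‖a‖ := by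
  refine LipschitzWith.of_dist_le_mul fun x y => ?_
  rcases eq_or_ne a 0 with rfl | ha
  · simp only [norm_zero, div_zero, dist_self]; positivity
  calc dist (ψ (⟪a, x⟫ - b) / ‖a‖) (ψ (⟪a, y⟫ - b) / ‖a‖)
      = |ψ (⟪a, x⟫ - b) - ψ (⟪a, y⟫ - b)| / ‖a‖ := by
        rw [Real.dist_eq, ← sub_div, abs_div, abs_norm]
    _ ≤ K * |(⟪a, x⟫ - b) - (⟪a, y⟫ - b)| / ‖a‖ := by
        gcongr
        simpa only [Real.dist_eq] using hψ.dist_le_mul _ _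
    _ = K * |⟪a, x - y⟫| / ‖a‖ := by rw [inner_sub_right, sub_sub_sub_cancel_right]
    _ ≤ K * (‖a‖ * ‖x - y‖) / ‖a‖ := by gcongr; exact abs_real_inner_le_norm a (x - y)
    _ = K * dist x y := by
        rw [dist_eq_norm]; field_simp [norm_ne_zero_iff.2 ha]

end InnerProductSpace

lemma LipschitzWith.inv_card_mul_sum {α ι : Type*} [PseudoMetricSpace α] [Fintype ι]
    {g : ι → α → ℝ} {K : ℝ≥0} (hg : ∀ i, LipschitzWith K (g i)) :
    LipschitzWith K fun x => (Fintype.card ι : ℝ)⁻¹ * ∑ i, g i x := by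
  refine LipschitzWith.of_dist_le_mul fun x y => ?_
  rw [Real.dist_eq, ← mul_sub, ← Finset.sum_sub_distrib, abs_mul, abs_inv, Nat.abs_cast]
  calc (Fintype.card ι : ℝ)⁻¹ * |∑ i, (g i x - g i y)|
      ≤ (Fintype.card ι : ℝ)⁻¹ * ∑ _i : ι, K * dist x y := by
        gcongr
        refine (Finset.abs_sum_le_sum_abs _ _).trans (Finset.sum_le_sum fun i _ => ?_)
        rw [← Real.dist_eq]
        exact (hg i).dist_le_mul x y
    _ = ((Fintype.card ι : ℝ)⁻¹ * Fintype.card ι) * (K * dist x y) := by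
        rw [Finset.sum_const, Finset.card_univ, nsmul_eq_mul]; ring
    _ ≤ K * dist x y :=
        mul_le_of_le_one_left (by positivity) (inv_mul_le_one_of_le₀ le_rfl (by positivity))

lemma convexOn_sum {E ι : Type*} [AddCommGroup E] [Module ℝ E] {s : Set E} (hs : Convex ℝ s)
    (t : Finset ι) {g : ι → E → ℝ} (hg : ∀ i ∈ t, ConvexOn ℝ s (g i)) :
    ConvexOn ℝ s fun x => ∑ i ∈ t, g i x := by
  induction t using Finset.cons_induction with
  | empty => simpa using convexOn_const (0 : ℝ) hs
  | cons i t hi ih =>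
    simp_rw [Finset.sum_cons]
    exact (hg i (Finset.mem_cons_self i t)).add (ih fun j hj => hg j (Finset.mem_cons_of_mem hj))

section StrongConvexity

variable {E : Type*} [NormedAddCommGroup E] [NormedSpace ℝ E] {s : Set E} {μ : ℝ} {F G : E → ℝ}

lemma StrongConvexOn.add_convexOn (hF : StrongConvexOn s μ F) (hG : ConvexOn ℝ s G) :
    StrongConvexOn s μ (F + G) := by
  unfold StrongConvexOn at hF ⊢
  simpa using hF.add hG.uniformConvexOn_zero

lemma StrongConvexOn.add_sq_le_of_isMinOn {x y : E} (hF : StrongConvexOn s μ F)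
    (hx : IsMinOn F s x) (hxs : x ∈ s) (hys : y ∈ s) :
    F x + μ / 2 * ‖x - y‖ ^ 2 ≤ F y := by
  -- compare `F x` with `F` at `θ • y + (1 - θ) • x`, then let `θ → 0⁺`
  have hsegment : ∀ θ ∈ Ioc (0 : ℝ) 1, (1 - θ) * (μ / 2 * ‖x - y‖ ^ 2) ≤ F y - F x := by
    rintro θ ⟨hθ₀, hθ₁⟩
    have hconv := hF.2 hys hxs hθ₀.le (sub_nonneg.2 hθ₁) (add_sub_cancel θ 1)
    have hmin := isMinOn_iff.1 hx _ (hF.1 hys hxs hθ₀.le (sub_nonneg.2 hθ₁) (add_sub_cancel θ 1))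
    rw [norm_sub_rev] at hconv
    simp only [smul_eq_mul] at hconv
    exact le_of_mul_le_mul_left (by linarith) hθ₀
  have hlim : Tendsto (fun θ : ℝ => (1 - θ) * (μ / 2 * ‖x - y‖ ^ 2)) (𝓝[>] 0)
      (𝓝 (μ / 2 * ‖x - y‖ ^ 2)) := by
    have : Continuous fun θ : ℝ => (1 - θ) * (μ / 2 * ‖x - y‖ ^ 2) := by fun_prop
    simpa using (this.tendsto 0).mono_left nhdsWithin_le_nhds
  linarith [le_of_tendsto hlim (eventually_of_mem (Ioc_mem_nhdsGT zero_lt_one) hsegment)]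

theorem StrongConvexOn.mul_norm_sub_le_of_isMinOn {K : ℝ≥0} {x y : E}
    (hF : StrongConvexOn univ μ F) (hG : StrongConvexOn univ μ G) (hK : LipschitzWith K (G - F))
    (hx : IsMinOn F univ x) (hy : IsMinOn G univ y) : μ * ‖x - y‖ ≤ K := by
  have hFx := hF.add_sq_le_of_isMinOn hx (mem_univ x) (mem_univ y)
  have hGy := hG.add_sq_le_of_isMinOn hy (mem_univ y) (mem_univ x)
  rw [norm_sub_rev y x] at hGy
  have hdiff : (G - F) x - (G - F) y ≤ K * ‖x - y‖ := by
    refine (le_abs_self _).trans ?_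
    simpa only [Real.dist_eq, dist_eq_norm, Real.norm_eq_abs] using hK.dist_le_mul x y
  simp only [Pi.sub_apply] at hdiff
  have hsq : μ * ‖x - y‖ * ‖x - y‖ ≤ K * ‖x - y‖ := by nlinarith
  rcases (norm_nonneg (x - y)).eq_or_lt with h0 | h0
  · rw [← h0, mul_zero]; exact K.coe_nonneg
  · exact le_of_mul_le_mul_right hsq h0

end StrongConvexity

lemma huber_eq_scalarHuber {n : ℕ} {δ : ℝ} (hδ : 0 < δ) (a : EuclideanSpace ℝ (Fin n)) (b : ℝ)
    (x : EuclideanSpace ℝ (Fin n)) : huber δ a b x = scalarHuber δ (⟪a, x⟫ - b) / ‖a‖ := by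
  rw [huber, scalarHuber_eq_ite hδ]
  split_ifs <;> simp only [div_div, zero_div]

lemma convexOn_huber {n : ℕ} {δ : ℝ} (hδ : 0 < δ) (a : EuclideanSpace ℝ (Fin n)) (b : ℝ) :
    ConvexOn ℝ univ (huber δ a b) := by
  refine ⟨convex_univ, fun x _ y _ p q hp hq hpq => ?_⟩
  have hlin : ⟪a, p • x + q • y⟫ - b = p * (⟪a, x⟫ - b) + q * (⟪a, y⟫ - b) := by
    rw [inner_add_right, real_inner_smul_right, real_inner_smul_right]
    linear_combination b * hpq
  have hconv := (convexOn_scalarHuber hδ.le).2 (mem_univ (⟪a, x⟫ - b)) (mem_univ (⟪a, y⟫ - b))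
    hp hq hpq
  simp only [smul_eq_mul] at hconv ⊢
  rw [huber_eq_scalarHuber hδ, huber_eq_scalarHuber hδ, huber_eq_scalarHuber hδ, hlin]
  calc scalarHuber δ (p * (⟪a, x⟫ - b) + q * (⟪a, y⟫ - b)) / ‖a‖
      ≤ (p * scalarHuber δ (⟪a, x⟫ - b) + q * scalarHuber δ (⟪a, y⟫ - b)) / ‖a‖ := by gcongr
    _ = _ := by ring

theorem minimizers_dist_le_general {n m : ℕ} (μ : ℝ)
    (f : EuclideanSpace ℝ (Fin n) → ℝ) (hf : StrongConvexOn Set.univ μ f)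
    (a : Fin m → EuclideanSpace ℝ (Fin n)) (b : Fin m → ℝ)
    (γ γ' δ δ' : ℝ) (hγ : 0 < γ) (hγγ' : γ ≤ γ') (hδ' : 0 < δ') (hδδ' : δ' ≤ δ)
    (xs ys : EuclideanSpace ℝ (Fin n))
    (hxs : IsMinOn (fun x => f x + (γ / m) * ∑ i, huber δ (a i) (b i) x) Set.univ xs)
    (hys : IsMinOn (fun x => f x + (γ' / m) * ∑ i, huber δ' (a i) (b i) x) Set.univ ys) :
    μ * ‖xs - ys‖ ≤ (γ' - γ) + γ * (δ - δ') / (2 * δ) := by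
  have hδ : 0 < δ := hδ'.trans_le hδδ'
  have hconst : 0 ≤ (γ' - γ) + γ * (δ - δ') / (2 * δ) := by
    have := sub_nonneg.2 hδδ'
    exact add_nonneg (sub_nonneg.2 hγγ') (by positivity)
  have hobjective : ∀ {c d : ℝ}, 0 ≤ c → 0 < d →
      StrongConvexOn univ μ fun x => f x + c * ∑ i, huber d (a i) (b i) x := fun hc hd =>
    hf.add_convexOn ((convexOn_sum convex_univ _ fun i _ => convexOn_huber hd (a i) (b i)).smul hc)
  have hdiff : ((fun x => f x + (γ' / m) * ∑ i, huber δ' (a i) (b i) x) -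
      fun x => f x + (γ / m) * ∑ i, huber δ (a i) (b i) x) = fun x =>
      (Fintype.card (Fin m) : ℝ)⁻¹ * ∑ i, (γ' * scalarHuber δ' (⟪a i, x⟫ - b i) -
        γ * scalarHuber δ (⟪a i, x⟫ - b i)) / ‖a i‖ := by
    funext x
    simp only [Pi.sub_apply, Fintype.card_fin, huber_eq_scalarHuber hδ, huber_eq_scalarHuber hδ',
      Finset.mul_sum, add_sub_add_left_eq_sub, ← Finset.sum_sub_distrib]
    exact Finset.sum_congr rfl fun i _ => by ring
  have hLipschitz := LipschitzWith.inv_card_mul_sum fun i =>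
    (lipschitzWith_scalarHuber_sub hγ.le hγγ' hδ' hδδ').comp_inner_sub_div_norm (a i) (b i)
  refine ((hobjective (by positivity) hδ).mul_norm_sub_le_of_isMinOn
    (hobjective (div_nonneg (hγ.le.trans hγγ') m.cast_nonneg) hδ') (hdiff ▸ hLipschitz) hxs
    hys).trans_eq ?_
  exact Real.coe_toNNReal _ hconst

/-- For a differentiable `μ`-strongly convex `f` and penalty parameters `0 < γ ≤ γ'`,
`δ ≥ δ' > 0`, the minimizers `x*` of `F_{γδ}` and `y*` of `F_{γ'δ'}` satisfy
`μ‖x* − y*‖ ≤ (γ' − γ) + γ(δ − δ')/(2δ)`. -/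
theorem minimizers_dist_le {n m : ℕ} (hm : 0 < m) (μ : ℝ) (hμ : 0 < μ)
    (f : EuclideanSpace ℝ (Fin n) → ℝ) (hf : StrongConvexOn Set.univ μ f)
    (hdf : Differentiable ℝ f)
    (a : Fin m → EuclideanSpace ℝ (Fin n)) (ha : ∀ i, a i ≠ 0) (b : Fin m → ℝ)
    (γ γ' δ δ' : ℝ) (hγ : 0 < γ) (hγγ' : γ ≤ γ') (hδ' : 0 < δ') (hδδ' : δ' ≤ δ)
    (xs ys : EuclideanSpace ℝ (Fin n))
    (hxs : IsMinOn (fun x => f x + (γ / m) * ∑ i, huber δ (a i) (b i) x) Set.univ xs)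
    (hys : IsMinOn (fun x => f x + (γ' / m) * ∑ i, huber δ' (a i) (b i) x) Set.univ ys) :
    μ * ‖xs - ys‖ ≤ (γ' - γ) + γ * (δ - δ') / (2 * δ) :=
  minimizers_dist_le_general μ f hf a b γ γ' δ δ' hγ hγγ' hδ' hδδ' xs ys hxs hys
end

section
/- Under the hypotheses of the error-bound lemma (f differentiable and μ-strongly convex, X = ∩_{i=1}^m {x : ⟨a_i,x⟩ ≤ b_i} nonempty with minimizer x* of f over X, x_γδ* the minimizer of F_{γδ}, p = Π_X[x_γδ*], β > 0 a Hoffman constant with β Σ_i dist(x,X_i) ≥ dist(x,X) for all x, and L ≥ ‖∇f(z)‖ on the segment joining x_γδ* and p), if moreover γ > 4mβL, then dist(x_γδ*, X) ≤ (mβ γδ)/(α_min (γ − 4mβL)), where α_min = min_{1≤i≤m} ‖a_i‖. -/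
/-!
Compare `x_γδ*` with its projection `p` onto `X`. Minimality of `x_γδ*` gives
`(γ/m) Σ h_δ(x_γδ*) ≤ f p - f x_γδ* + (γ/m) Σ h_δ(p)`. On the left, `h_δ` dominates the distance to
its halfspace, so Hoffman's bound turns the sum into at least `dist(x_γδ*, X)/β`; on the right, the
gradient bound controls `f p - f x_γδ*` by `L ‖x_γδ* - p‖ = L dist(x_γδ*, X)`, and at a feasible
point each penalty is at most `δ/(4 α_min)`. Solving the resulting linear inequality for the distance
gives the bound.
-/

open scoped RealInnerProductSpace

open Metric

noncomputable def huberProfile (δ t : ℝ) : ℝ :=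
  if δ < t then t else if -δ ≤ t then (t + δ) ^ 2 / (4 * δ) else 0

lemma huber_eq_huberProfile_div {n : ℕ} (δ : ℝ) (a : EuclideanSpace ℝ (Fin n)) (b : ℝ)
    (x : EuclideanSpace ℝ (Fin n)) :
    huber δ a b x = huberProfile δ (⟪a, x⟫ - b) / ‖a‖ := by
  unfold huber huberProfile
  split_ifs <;> simp only [div_div, zero_div]

lemma max_le_huberProfile {δ : ℝ} (hδ : 0 < δ) (t : ℝ) : max t 0 ≤ huberProfile δ t := by
  unfold huberProfile
  split_ifs with hpos hmid
  · exact max_le le_rfl (by linarith)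
  · rw [le_div_iff₀ (by positivity)]
    rcases le_total t 0 with ht | ht
    · rw [max_eq_right ht, zero_mul]; positivity
    · rw [max_eq_left ht]; nlinarith [sq_nonneg (t - δ)]
  · exact max_le (by linarith) le_rfl

lemma huberProfile_le_of_nonpos {δ t : ℝ} (hδ : 0 < δ) (ht : t ≤ 0) :
    huberProfile δ t ≤ δ / 4 := by
  unfold huberProfile
  split_ifs with hpos hmid
  · linarith
  · rw [div_le_div_iff₀ (by positivity) (by positivity)]
    nlinarith
  · positivity

lemma infDist_halfspace_le {E : Type*} [NormedAddCommGroup E] [InnerProductSpace ℝ E]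
    {a : E} (ha : a ≠ 0) (b : ℝ) (x : E) :
    infDist x {y | ⟪a, y⟫ ≤ b} ≤ max (⟪a, x⟫ - b) 0 / ‖a‖ := by
  have hna : 0 < ‖a‖ := norm_pos_iff.mpr ha
  set r := max (⟪a, x⟫ - b) 0
  -- the projection of `x` onto the halfspace
  set y := x - (r / ‖a‖ ^ 2) • a
  have hy : ⟪a, y⟫ ≤ b := by
    have hcoef : r / ‖a‖ ^ 2 * ‖a‖ ^ 2 = r := by field_simp
    simp only [y, inner_sub_right, real_inner_smul_right, real_inner_self_eq_norm_sq, hcoef]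
    linarith [le_max_left (⟪a, x⟫ - b) 0]
  have hxy : dist x y = r / ‖a‖ := by
    rw [dist_eq_norm, sub_sub_cancel, norm_smul, Real.norm_of_nonneg (by positivity)]
    field_simp
  exact hxy ▸ infDist_le_dist_of_mem hy

lemma infDist_halfspace_le_huber {n : ℕ} {δ : ℝ} (hδ : 0 < δ) {a : EuclideanSpace ℝ (Fin n)}
    (ha : a ≠ 0) (b : ℝ) (x : EuclideanSpace ℝ (Fin n)) :
    infDist x {y | ⟪a, y⟫ ≤ b} ≤ huber δ a b x :=
  (infDist_halfspace_le ha b x).trans <| by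
    rw [huber_eq_huberProfile_div]
    exact div_le_div_of_nonneg_right (max_le_huberProfile hδ _) (norm_nonneg a)

lemma huber_le_of_inner_le {n : ℕ} {δ : ℝ} (hδ : 0 < δ) {a : EuclideanSpace ℝ (Fin n)}
    {b : ℝ} {p : EuclideanSpace ℝ (Fin n)} (hp : ⟪a, p⟫ ≤ b) :
    huber δ a b p ≤ δ / (4 * ‖a‖) := by
  rw [huber_eq_huberProfile_div, ← div_div]
  exact div_le_div_of_nonneg_right (huberProfile_le_of_nonpos hδ (sub_nonpos.mpr hp))
    (norm_nonneg a)

lemma ciInf_norm_pos {ι E : Type*} [Finite ι] [Nonempty ι] [NormedAddCommGroup E] {a : ι → E}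
    (ha : ∀ i, a i ≠ 0) : 0 < ⨅ i, ‖a i‖ := by
  obtain ⟨i, hi⟩ := exists_eq_ciInf_of_finite (f := fun i => ‖a i‖)
  exact hi ▸ norm_pos_iff.mpr (ha i)

lemma sum_huber_le_of_forall_inner_le {ι : Type*} [Fintype ι] [Nonempty ι] {n : ℕ} {δ : ℝ}
    (hδ : 0 < δ) {a : ι → EuclideanSpace ℝ (Fin n)} (ha : ∀ i, a i ≠ 0) {b : ι → ℝ}
    {p : EuclideanSpace ℝ (Fin n)} (hp : ∀ i, ⟪a i, p⟫ ≤ b i) :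
    ∑ i, huber δ (a i) (b i) p ≤ Fintype.card ι * (δ / (4 * ⨅ i, ‖a i‖)) := by
  have hα := ciInf_norm_pos ha
  calc ∑ i, huber δ (a i) (b i) p ≤ ∑ _i : ι, δ / (4 * ⨅ i, ‖a i‖) :=
        Finset.sum_le_sum fun i _ => (huber_le_of_inner_le hδ (hp i)).trans <|
          div_le_div_of_nonneg_left hδ.le (by positivity) <| by
            gcongr; exact ciInf_le (Set.finite_range _).bddBelow i
    _ = Fintype.card ι * (δ / (4 * ⨅ i, ‖a i‖)) := by
        rw [Finset.sum_const, Finset.card_univ, nsmul_eq_mul]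

lemma norm_image_sub_le_of_norm_gradient_le_segment {E : Type*} [NormedAddCommGroup E]
    [InnerProductSpace ℝ E] [CompleteSpace E] {f : E → ℝ} {x y : E} {L : ℝ}
    (hf : ∀ z ∈ segment ℝ x y, DifferentiableAt ℝ f z)
    (hL : ∀ z ∈ segment ℝ x y, ‖gradient f z‖ ≤ L) :
    ‖f y - f x‖ ≤ L * ‖y - x‖ :=
  (convex_segment x y).norm_image_sub_le_of_norm_fderiv_le hf
    (fun z hz => (InnerProductSpace.toDual ℝ E).symm.norm_map _ ▸ hL z hz)
    (left_mem_segment ℝ x y) (right_mem_segment ℝ x y)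

lemma infDist_eq_norm_sub_of_forall_norm_sub_le {E : Type*} [SeminormedAddCommGroup E]
    {s : Set E} {x p : E} (hp : p ∈ s) (hmin : ∀ y ∈ s, ‖x - p‖ ≤ ‖x - y‖) :
    infDist x s = ‖x - p‖ :=
  le_antisymm (dist_eq_norm x p ▸ infDist_le_dist_of_mem hp)
    ((le_infDist ⟨p, hp⟩).mpr fun y hy => dist_eq_norm x y ▸ hmin y hy)

lemma le_div_of_penalty_balance {m β γ δ L α d s t : ℝ} (hm : 0 < m) (hβ : 0 < β)
    (hγ : 0 < γ) (hα : 0 < α) (hγL : 4 * m * β * L < γ) (hd : 0 ≤ d) (hds : d ≤ β * s)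
    (ht : t ≤ m * (δ / (4 * α))) (hbal : γ / m * s ≤ L * d + γ / m * t) :
    d ≤ m * β * γ * δ / (α * (γ - 4 * m * β * L)) := by
  have hs : γ * s ≤ m * L * d + γ * t := by
    have := mul_le_mul_of_nonneg_left hbal hm.le
    field_simp at this
    linarith
  have ht' : 4 * α * t ≤ m * δ := by
    have := mul_le_mul_of_nonneg_left ht (by positivity : 0 ≤ 4 * α)
    field_simp at this
    linarith
  rw [le_div_iff₀ (mul_pos hα (by linarith))]
  nlinarith [mul_le_mul_of_nonneg_left hds (by positivity : 0 ≤ 4 * α * γ),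
    mul_le_mul_of_nonneg_left hs (by positivity : 0 ≤ 4 * α * β),
    mul_le_mul_of_nonneg_left ht' (by positivity : 0 ≤ β * γ), mul_nonneg hα.le hd]

theorem penalized_dist_bound_general {n m : ℕ} (hm : 0 < m)
    (f : EuclideanSpace ℝ (Fin n) → ℝ)
    (hdf : Differentiable ℝ f)
    (a : Fin m → EuclideanSpace ℝ (Fin n)) (ha : ∀ i, a i ≠ 0) (b : Fin m → ℝ)
    (X : Set (EuclideanSpace ℝ (Fin n)))
    (hX : X = {x | ∀ i, ⟪a i, x⟫ ≤ b i})
    (γ δ : ℝ) (hγ : 0 < γ) (hδ : 0 < δ)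
    (xg : EuclideanSpace ℝ (Fin n))
    (hxg : IsMinOn (fun x => f x + (γ / m) * ∑ i, huber δ (a i) (b i) x) Set.univ xg)
    (p : EuclideanSpace ℝ (Fin n)) (hpX : p ∈ X) (hproj : ∀ y ∈ X, ‖xg - p‖ ≤ ‖xg - y‖)
    (β : ℝ) (hβ : 0 < β)
    (hHoffman : ∀ x, Metric.infDist x X ≤
      β * ∑ i, Metric.infDist x {y : EuclideanSpace ℝ (Fin n) | ⟪a i, y⟫ ≤ b i})
    (L : ℝ) (hLbound : ∀ z ∈ segment ℝ xg p, ‖gradient f z‖ ≤ L)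
    (hγL : 4 * m * β * L < γ) :
    Metric.infDist xg X ≤ m * β * γ * δ / ((⨅ i, ‖a i‖) * (γ - 4 * m * β * L)) := by
  have : Nonempty (Fin m) := ⟨⟨0, hm⟩⟩
  have hdist : infDist xg X = ‖xg - p‖ := infDist_eq_norm_sub_of_forall_norm_sub_le hpX hproj
  have hpenalty : infDist xg X ≤ β * ∑ i, huber δ (a i) (b i) xg :=
    (hHoffman xg).trans <| mul_le_mul_of_nonneg_left
      (Finset.sum_le_sum fun i _ => infDist_halfspace_le_huber hδ (ha i) (b i) xg) hβ.le
  have hfeasible := sum_huber_le_of_forall_inner_le hδ ha (p := p) (hX ▸ hpX)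
  rw [Fintype.card_fin] at hfeasible
  have hgrowth : f p - f xg ≤ L * infDist xg X := by
    rw [hdist, norm_sub_rev]
    exact (le_abs_self _).trans
      (norm_image_sub_le_of_norm_gradient_le_segment (fun z _ => hdf z) hLbound)
  have hmin : f xg + γ / m * ∑ i, huber δ (a i) (b i) xg
      ≤ f p + γ / m * ∑ i, huber δ (a i) (b i) p := hxg (Set.mem_univ p)
  exact le_div_of_penalty_balance (by exact_mod_cast hm) hβ hγ (ciInf_norm_pos ha) hγL
    infDist_nonneg hpenalty hfeasible (by linarith)

/-- Under the error-bound lemma hypotheses, if moreover `γ > 4mβL`, then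
`dist(x_{γδ}*, X) ≤ mβγδ/(α_min(γ − 4mβL))`. -/
theorem penalized_dist_bound {n m : ℕ} (hm : 0 < m) (μ : ℝ) (hμ : 0 < μ)
    (f : EuclideanSpace ℝ (Fin n) → ℝ) (hf : StrongConvexOn Set.univ μ f)
    (hdf : Differentiable ℝ f)
    (a : Fin m → EuclideanSpace ℝ (Fin n)) (ha : ∀ i, a i ≠ 0) (b : Fin m → ℝ)
    (X : Set (EuclideanSpace ℝ (Fin n)))
    (hX : X = {x | ∀ i, ⟪a i, x⟫ ≤ b i}) (hXne : X.Nonempty)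
    (xstar : EuclideanSpace ℝ (Fin n)) (hxstarX : xstar ∈ X) (hxstar : IsMinOn f X xstar)
    (γ δ : ℝ) (hγ : 0 < γ) (hδ : 0 < δ)
    (xg : EuclideanSpace ℝ (Fin n))
    (hxg : IsMinOn (fun x => f x + (γ / m) * ∑ i, huber δ (a i) (b i) x) Set.univ xg)
    (p : EuclideanSpace ℝ (Fin n)) (hpX : p ∈ X) (hproj : ∀ y ∈ X, ‖xg - p‖ ≤ ‖xg - y‖)
    (β : ℝ) (hβ : 0 < β)
    (hHoffman : ∀ x, Metric.infDist x X ≤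
      β * ∑ i, Metric.infDist x {y : EuclideanSpace ℝ (Fin n) | ⟪a i, y⟫ ≤ b i})
    (L : ℝ) (hL : 0 < L) (hLbound : ∀ z ∈ segment ℝ xg p, ‖gradient f z‖ ≤ L)
    (hγL : 4 * m * β * L < γ) :
    Metric.infDist xg X ≤ m * β * γ * δ / ((⨅ i, ‖a i‖) * (γ - 4 * m * β * L)) :=
  penalized_dist_bound_general hm f hdf a ha b X hX γ δ hγ hδ xg hxg p hpX hproj β hβ hHoffman L
    hLbound hγL
end
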